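/- Let m ≥ 1 and let κ, M > 0. There exists C > 0 depending only on m, M and κ such that: for every D̃ ∈ Matrix (Fin m) (Fin m) ℂ with ‖D̃‖ ≤ M and all eigenvalues of D̃ having real part ≥ κ, and for all blocks R₁ ∈ Matrix (Fin 1) (Fin m) ℂ and R₂ ∈ Matrix (Fin m) (Fin 1) ℂ, there exist N₁ ∈ Matrix (Fin 1) (Fin m) ℂ and N₂ ∈ Matrix (Fin m) (Fin 1) ℂ such that, setting D = fromBlocks 0 0 0 D̃, N = fromBlocks 0 N₁ N₂ 0 and R = fromBlocks 0 R₁ R₂ 0 (all of size (1+m)×(1+m)), the commutator equation D·N − N·D = R holds and ‖N‖ ≤ C·‖R‖. -/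

import Mathlib

/-!
Off the block diagonal the commutator equation decouples into `-N₁ D̃ = R₁` and `D̃ N₂ = R₂`,
solved by `N₁ = R₁ (-D̃)⁻¹` and `N₂ = D̃⁻¹ R₂`, i.e. `N = P(D̃) R P(-D̃)` with
`P(X) = bdiag(1, X⁻¹)`. Every eigenvalue of `D̃` has modulus at least `κ`, so `|det D̃| ≥ κ^m`:
`±D̃` range over the compact set `{X | ‖X‖ ≤ M, κ^m ≤ |det X|}` of invertible matrices, on which
`P` is continuous and hence bounded.
-/

open scoped Matrix.Norms.L2Operator NNReal
open Polynomial

namespace Matrix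

variable {n l : Type*} [Fintype n] [DecidableEq n] [Fintype l]

theorem card_roots_charpoly {K : Type*} [Field K] [IsAlgClosed K] (A : Matrix n n K) :
    A.charpoly.roots.card = Fintype.card n := by
  rw [← charpoly_natDegree_eq_dim A, ← splits_iff_card_roots]
  exact IsAlgClosed.splits _

theorem pow_card_le_norm_det {𝕜 : Type*} [NormedField 𝕜] [IsAlgClosed 𝕜] (A : Matrix n n 𝕜)
    {κ : ℝ} (hκ : 0 ≤ κ) (h : ∀ μ ∈ spectrum 𝕜 A, κ ≤ ‖μ‖) :
    κ ^ Fintype.card n ≤ ‖A.det‖ := by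
  lift κ to ℝ≥0 using hκ
  rw [← coe_nnnorm, ← NNReal.coe_pow, NNReal.coe_le_coe, det_eq_prod_roots_charpoly,
    ← card_roots_charpoly A, ← nnnormHom_apply, map_multiset_prod, ← Multiset.card_map nnnormHom]
  refine Multiset.pow_card_le_prod fun x hx => ?_
  obtain ⟨μ, hμ, rfl⟩ := Multiset.mem_map.mp hx
  exact h μ (mem_spectrum_iff_isRoot_charpoly.mpr (isRoot_of_mem_roots hμ))

theorem continuousAt_inv_of_det_ne_zero {K : Type*} [Field K] [TopologicalSpace K]
    [IsTopologicalRing K] [ContinuousInv₀ K] {A : Matrix n n K} (h : A.det ≠ 0) :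
    ContinuousAt Inv.inv A := by
  refine continuousAt_matrix_inv A ?_
  simpa only [Ring.inverse_eq_inv'] using continuousAt_inv₀ h

theorem isCompact_setOf_norm_le_and_le_norm_det {𝕜 : Type*} [RCLike 𝕜] (M δ : ℝ) :
    IsCompact {A : Matrix n n 𝕜 | ‖A‖ ≤ M ∧ δ ≤ ‖A.det‖} := by
  have := FiniteDimensional.proper_rclike 𝕜 (Matrix n n 𝕜)
  simp_rw [← mem_closedBall_zero_iff]
  exact (isCompact_closedBall 0 M).inter_right
    (isClosed_le continuous_const continuous_id.matrix_det.norm)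

variable {α : Type*} [Ring α]

theorem fromBlocks_zero_mul_sub_mul_fromBlocks_zero (D : Matrix n n α) (N₁ : Matrix l n α)
    (N₂ : Matrix n l α) :
    fromBlocks (0 : Matrix l l α) 0 0 D * fromBlocks 0 N₁ N₂ 0 -
        fromBlocks 0 N₁ N₂ 0 * fromBlocks 0 0 0 D =
      fromBlocks 0 (-(N₁ * D)) (D * N₂) 0 := by
  simp [fromBlocks_multiply, sub_eq_add_neg, fromBlocks_neg, fromBlocks_add]

theorem fromBlocks_one_mul_mul_fromBlocks_one [DecidableEq l] (X Y : Matrix n n α)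
    (R₁ : Matrix l n α) (R₂ : Matrix n l α) :
    fromBlocks 1 0 0 X * fromBlocks 0 R₁ R₂ 0 * fromBlocks 1 0 0 Y =
      fromBlocks 0 (R₁ * Y) (X * R₂) 0 := by
  simp [fromBlocks_multiply]

end Matrix

open Matrix

theorem stmt8_general
    (m : ℕ) (κ M : ℝ) (hκ : 0 < κ) :
    ∃ C : ℝ, 0 < C ∧
      ∀ Dt : Matrix (Fin m) (Fin m) ℂ, ‖Dt‖ ≤ M →
        (∀ lam ∈ spectrum ℂ Dt, κ ≤ lam.re) →
      ∀ (R₁ : Matrix (Fin 1) (Fin m) ℂ) (R₂ : Matrix (Fin m) (Fin 1) ℂ),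
        ∃ (N₁ : Matrix (Fin 1) (Fin m) ℂ) (N₂ : Matrix (Fin m) (Fin 1) ℂ),
          Matrix.fromBlocks 0 0 0 Dt * Matrix.fromBlocks 0 N₁ N₂ 0 -
            Matrix.fromBlocks 0 N₁ N₂ 0 * Matrix.fromBlocks 0 0 0 Dt =
            Matrix.fromBlocks 0 R₁ R₂ 0 ∧
          ‖Matrix.fromBlocks 0 N₁ N₂ 0‖ ≤ C * ‖Matrix.fromBlocks 0 R₁ R₂ 0‖ := by
  set S := {A : Matrix (Fin m) (Fin m) ℂ | ‖A‖ ≤ M ∧ κ ^ m ≤ ‖A.det‖}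
  have hdet : ∀ A ∈ S, A.det ≠ 0 := fun A hA => norm_pos_iff.mp ((pow_pos hκ m).trans_le hA.2)
  have hP : ContinuousOn (fun A => fromBlocks (1 : Matrix (Fin 1) (Fin 1) ℂ) 0 0 A⁻¹) S :=
    (continuous_const.matrix_fromBlocks continuous_const continuous_const continuous_id)
      |>.comp_continuousOn fun A hA =>
        (continuousAt_inv_of_det_ne_zero (hdet A hA)).continuousWithinAt
  obtain ⟨C, hC⟩ :=
    (isCompact_setOf_norm_le_and_le_norm_det M (κ ^ m)).exists_bound_of_continuousOn hP
  refine ⟨max C 1 ^ 2, by positivity, fun Dt hDt hspec R₁ R₂ => ?_⟩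
  have hS : Dt ∈ S := ⟨hDt, by
    simpa using pow_card_le_norm_det Dt hκ.le fun μ hμ => (hspec μ hμ).trans (Complex.re_le_norm μ)⟩
  have hS_neg : -Dt ∈ S := by simpa [S, det_neg] using hS
  refine ⟨R₁ * (-Dt)⁻¹, Dt⁻¹ * R₂, ?_, ?_⟩
  · rw [fromBlocks_zero_mul_sub_mul_fromBlocks_zero, ← Matrix.mul_neg, Matrix.mul_assoc,
      nonsing_inv_mul _ (hdet _ hS_neg).isUnit, ← Matrix.mul_assoc,
      mul_nonsing_inv _ (hdet _ hS).isUnit, Matrix.mul_one, Matrix.one_mul]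
  · rw [← fromBlocks_one_mul_mul_fromBlocks_one]
    calc _ ≤ ‖fromBlocks (1 : Matrix (Fin 1) (Fin 1) ℂ) 0 0 Dt⁻¹‖ * ‖fromBlocks 0 R₁ R₂ 0‖ *
          ‖fromBlocks (1 : Matrix (Fin 1) (Fin 1) ℂ) 0 0 (-Dt)⁻¹‖ :=
          (l2_opNorm_mul _ _).trans (by gcongr; exact l2_opNorm_mul _ _)
      _ ≤ max C 1 * ‖fromBlocks 0 R₁ R₂ 0‖ * max C 1 := by
          gcongr
          exacts [(hC _ hS).trans (le_max_left _ _), (hC _ hS_neg).trans (le_max_left _ _)]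
      _ = max C 1 ^ 2 * ‖fromBlocks 0 R₁ R₂ 0‖ := by ring

/-- uniform solvability of the Sylvester (commutator) equation
`D·N − N·D = R` for block matrices `D = bdiag(0, D̃)` with `D̃` having spectral gap `κ`
and norm bound `M`, and `R` off-block-diagonal, with `‖N‖ ≤ C‖R‖`. -/
theorem stmt8
    (m : ℕ) (hm : 1 ≤ m) (κ M : ℝ) (hκ : 0 < κ) (hM : 0 < M) :
    ∃ C : ℝ, 0 < C ∧
      ∀ Dt : Matrix (Fin m) (Fin m) ℂ, ‖Dt‖ ≤ M →
        (∀ lam ∈ spectrum ℂ Dt, κ ≤ lam.re) →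
      ∀ (R₁ : Matrix (Fin 1) (Fin m) ℂ) (R₂ : Matrix (Fin m) (Fin 1) ℂ),
        ∃ (N₁ : Matrix (Fin 1) (Fin m) ℂ) (N₂ : Matrix (Fin m) (Fin 1) ℂ),
          Matrix.fromBlocks 0 0 0 Dt * Matrix.fromBlocks 0 N₁ N₂ 0 -
            Matrix.fromBlocks 0 N₁ N₂ 0 * Matrix.fromBlocks 0 0 0 Dt =
            Matrix.fromBlocks 0 R₁ R₂ 0 ∧
          ‖Matrix.fromBlocks 0 N₁ N₂ 0‖ ≤ C * ‖Matrix.fromBlocks 0 R₁ R₂ 0‖ :=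
  stmt8_general m κ M hκ
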